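/- Let Φ : ℝⁿ → [0,∞) be a finite-valued, differentiable n-dimensional Young function satisfying Φ(ξ)/|ξ| → +∞ as |ξ| → ∞, and let Φ_• be its Young conjugate. Then for every ε ∈ (0,1) and every ξ ∈ ℝⁿ one has (ε/(1−ε)) Φ_•(∇Φ((1−ε)ξ)) ≤ Φ(ξ). -/

import Mathlib

open MeasureTheory Filter Topology
open scoped RealInnerProductSpace ENNReal

/-- An `n`-dimensional (finite-valued) Young function: an even, convex function
`Φ : ℝⁿ → [0,∞)` with `Φ(0) = 0` such that for every `t > 0` the sublevel set
`{ξ : Φ ξ < t}` is bounded and is a neighborhood of `0`. -/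
structure IsYoungFunction {n : ℕ} (Φ : EuclideanSpace ℝ (Fin n) → ℝ) : Prop where
  nonneg : ∀ ξ, 0 ≤ Φ ξ
  even : ∀ ξ, Φ (-ξ) = Φ ξ
  convex : ConvexOn ℝ Set.univ Φ
  map_zero : Φ 0 = 0
  sublevel_bounded : ∀ t > 0, Bornology.IsBounded {ξ | Φ ξ < t}
  sublevel_mem_nhds : ∀ t > 0, {ξ | Φ ξ < t} ∈ 𝓝 (0 : EuclideanSpace ℝ (Fin n))

/-- The Young conjugate `Φ_•(η) = sup_ξ (ξ·η − Φ(ξ))`, with values in `[0,∞]`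
(the supremum is always nonnegative, since `ξ = 0` contributes `0`). -/
noncomputable def youngConj {n : ℕ} (Φ : EuclideanSpace ℝ (Fin n) → ℝ)
    (η : EuclideanSpace ℝ (Fin n)) : ℝ≥0∞ :=
  ⨆ ξ : EuclideanSpace ℝ (Fin n), ENNReal.ofReal (⟪ξ, η⟫ - Φ ξ)

/-!
Write `x = (1 - ε) ξ` and `η = ∇Φ(x)`. By the gradient inequality for convex functions,
`ζ · η - Φ(ζ) ≤ x · η - Φ(x)` for every `ζ`, so the supremum defining `Φ_•(η)` is attained at
`x`. The same inequality between `x` and `ξ` gives `ε ξ · η ≤ Φ(ξ) - Φ(x)`, and multiplying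
`Φ_•(η) = (1 - ε) ξ · η - Φ(x)` by `ε / (1 - ε)` yields at most `Φ(ξ) - Φ(x) / (1 - ε) ≤ Φ(ξ)`.
-/

theorem ConvexOn.add_fderiv_sub_le {E : Type*} [NormedAddCommGroup E] [NormedSpace ℝ E]
    {s : Set E} {f : E → ℝ} {f' : E →L[ℝ] ℝ} {x y : E} (hf : ConvexOn ℝ s f)
    (hx : x ∈ s) (hy : y ∈ s) (hf' : HasFDerivAt f f' x) :
    f x + f' (y - x) ≤ f y := by
  set L : ℝ →ᵃ[ℝ] E := AffineMap.lineMap x y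
  have hline : ConvexOn ℝ (L ⁻¹' s) (f ∘ L) := hf.comp_affineMap L
  have hderiv : HasDerivAt (f ∘ L) (f' (y - x)) 0 := by
    have hf'L : HasFDerivAt f f' (L 0) := by simpa [L] using hf'
    exact hf'L.comp_hasDerivAt 0 AffineMap.hasDerivAt_lineMap
  have hslope := hline.deriv_le_slope (x := 0) (y := 1) (by simpa [L] using hx)
    (by simpa [L] using hy) one_pos hderiv.differentiableAt
  rw [hderiv.deriv, slope_def_field] at hslope
  simp only [L, Function.comp_apply, AffineMap.lineMap_apply_zero, AffineMap.lineMap_apply_one,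
    sub_zero, div_one] at hslope
  linarith

theorem ConvexOn.add_inner_gradient_sub_le {E : Type*} [NormedAddCommGroup E]
    [InnerProductSpace ℝ E] [CompleteSpace E] {s : Set E} {f : E → ℝ} {x y : E}
    (hf : ConvexOn ℝ s f) (hx : x ∈ s) (hy : y ∈ s) (hfx : DifferentiableAt ℝ f x) :
    f x + ⟪gradient f x, y - x⟫ ≤ f y := by
  simpa using hf.add_fderiv_sub_le hx hy hfx.hasGradientAt.hasFDerivAt

theorem youngConj_gradient_le {n : ℕ} {Φ : EuclideanSpace ℝ (Fin n) → ℝ}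
    (hΦ : ConvexOn ℝ Set.univ Φ) {x : EuclideanSpace ℝ (Fin n)} (hΦx : DifferentiableAt ℝ Φ x) :
    youngConj Φ (gradient Φ x) ≤ ENNReal.ofReal (⟪x, gradient Φ x⟫ - Φ x) := by
  refine iSup_le fun ζ => ENNReal.ofReal_le_ofReal ?_
  have h := hΦ.add_inner_gradient_sub_le (Set.mem_univ x) (Set.mem_univ ζ) hΦx
  rw [inner_sub_right, real_inner_comm ζ, real_inner_comm x] at h
  linarith

theorem conj_gradient_scaled_le_general {n : ℕ}
    (Φ : EuclideanSpace ℝ (Fin n) → ℝ) (hY : IsYoungFunction Φ)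
    (hdiff : Differentiable ℝ Φ)
    (ε : ℝ) (hε : ε ∈ Set.Ioo (0 : ℝ) 1) (ξ : EuclideanSpace ℝ (Fin n)) :
    ENNReal.ofReal (ε / (1 - ε)) * youngConj Φ (gradient Φ ((1 - ε) • ξ)) ≤
      ENNReal.ofReal (Φ ξ) := by
  obtain ⟨hε0, hε1⟩ := hε
  have hε1' : 0 < 1 - ε := sub_pos.mpr hε1
  have hc : 0 ≤ ε / (1 - ε) := (div_pos hε0 hε1').le
  set x := (1 - ε) • ξ
  set η := gradient Φ x
  have hgrad : Φ x + ε * ⟪η, ξ⟫ ≤ Φ ξ := by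
    have h := hY.convex.add_inner_gradient_sub_le (Set.mem_univ x) (Set.mem_univ ξ) (hdiff x)
    rwa [show ξ - x = ε • ξ by module, real_inner_smul_right] at h
  have hreal : ε / (1 - ε) * (⟪x, η⟫ - Φ x) ≤ Φ ξ := by
    have hsplit : ε / (1 - ε) * (⟪x, η⟫ - Φ x) = ε * ⟪η, ξ⟫ - ε / (1 - ε) * Φ x := by
      rw [real_inner_smul_left, real_inner_comm]
      field_simp [hε1'.ne']
    nlinarith [hY.nonneg x]
  calc ENNReal.ofReal (ε / (1 - ε)) * youngConj Φ η
      ≤ ENNReal.ofReal (ε / (1 - ε)) * ENNReal.ofReal (⟪x, η⟫ - Φ x) :=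
        mul_le_mul_right (youngConj_gradient_le hY.convex (hdiff x)) _
    _ = ENNReal.ofReal (ε / (1 - ε) * (⟪x, η⟫ - Φ x)) := (ENNReal.ofReal_mul hc).symm
    _ ≤ ENNReal.ofReal (Φ ξ) := ENNReal.ofReal_le_ofReal hreal

/-- For a differentiable finite-valued `n`-dimensional Young function `Φ` with
`Φ(ξ)/|ξ| → ∞` as `|ξ| → ∞`, for every `ε ∈ (0,1)` and `ξ ∈ ℝⁿ` one has
`(ε/(1−ε)) Φ_•(∇Φ((1−ε)ξ)) ≤ Φ(ξ)`. -/
theorem conj_gradient_scaled_le {n : ℕ}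
    (Φ : EuclideanSpace ℝ (Fin n) → ℝ) (hY : IsYoungFunction Φ)
    (hdiff : Differentiable ℝ Φ)
    (hinf : Tendsto (fun ξ => Φ ξ / ‖ξ‖)
      (Bornology.cobounded (EuclideanSpace ℝ (Fin n))) atTop)
    (ε : ℝ) (hε : ε ∈ Set.Ioo (0 : ℝ) 1) (ξ : EuclideanSpace ℝ (Fin n)) :
    ENNReal.ofReal (ε / (1 - ε)) * youngConj Φ (gradient Φ ((1 - ε) • ξ)) ≤
      ENNReal.ofReal (Φ ξ) :=
  conj_gradient_scaled_le_general Φ hY hdiff ε hε ξ
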